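/- Let f : {−1,1}^n → ℝ be monotone, i.e. x ⪯ y (coordinatewise) implies f(x) ≤ f(y). Then for every p ∈ (0,1), under the p-biased measure μ_p one has Σ_{i=1}^n E_{μ_p}[ f∘τ_i^+ − f∘τ_i^− ] ≥ 2·Σ_{i=1}^n ‖f − E_i[f]‖₁; in particular the derivative of p ↦ E_{μ_p}[f] is at least 2·Σ_{i=1}^n ‖f − E_i[f]‖₁. -/

import Mathlib

open Filter Function Real

noncomputable def pwt (p : ℝ) {n : ℕ} (x : Fin n → Bool) : ℝ :=
  ∏ i, if x i then p else 1 - p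

noncomputable def pE (p : ℝ) {n : ℕ} (f : (Fin n → Bool) → ℝ) : ℝ :=
  ∑ x, pwt p x * f x

noncomputable def pNorm (p q : ℝ) {n : ℕ} (f : (Fin n → Bool) → ℝ) : ℝ :=
  (pE p fun x => |f x| ^ q) ^ (1 / q)

noncomputable def pVar (p : ℝ) {n : ℕ} (f : (Fin n → Bool) → ℝ) : ℝ :=
  pE p (fun x => f x ^ 2) - (pE p f) ^ 2

noncomputable def condE (p : ℝ) {n : ℕ} (i : Fin n) (f : (Fin n → Bool) → ℝ) :
    (Fin n → Bool) → ℝ :=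
  fun x => (1 - p) * f (Function.update x i false) + p * f (Function.update x i true)

noncomputable def chi (p : ℝ) {n : ℕ} (S : Finset (Fin n)) (x : Fin n → Bool) : ℝ :=
  ∏ i ∈ S, ((if x i then (1:ℝ) else -1) - (2 * p - 1)) / (2 * Real.sqrt (p * (1 - p)))

noncomputable def fhat (p : ℝ) {n : ℕ} (f : (Fin n → Bool) → ℝ) (S : Finset (Fin n)) : ℝ :=
  pE p fun x => f x * chi p S x

noncomputable def noiseOp (p δ : ℝ) {n : ℕ} (f : (Fin n → Bool) → ℝ) :
    (Fin n → Bool) → ℝ :=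
  fun x => ∑ S : Finset (Fin n), δ ^ S.card * fhat p f S * chi p S x

/-!
Write `D_i f x = f (x with xᵢ = 1) - f (x with xᵢ = 0)`, which is `≥ 0` for monotone `f`.
Given the other coordinates, `f - E_i f` equals `(1 - p) D_i f` when `xᵢ = 1` and `-p D_i f` when
`xᵢ = 0`, so averaging over `xᵢ` gives `‖f - E_i f‖₁ = 2p(1-p) E[D_i f]`, and `4p(1-p) ≤ 1`.
The derivative statement is the Margulis–Russo formula `d/dp E_{μ_p}[f] = Σᵢ E[D_i f]`, obtained
by differentiating the product weights.
-/

section PBiased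

variable {n : ℕ}

noncomputable def bitWeight (p : ℝ) (b : Bool) : ℝ := if b then p else 1 - p

noncomputable def pwtErase (p : ℝ) (i : Fin n) (x : Fin n → Bool) : ℝ :=
  ∏ j ∈ Finset.univ.erase i, bitWeight p (x j)

def coordDiff (f : (Fin n → Bool) → ℝ) (i : Fin n) (x : Fin n → Bool) : ℝ :=
  f (update x i true) - f (update x i false)

lemma hasDerivAt_bitWeight (b : Bool) (p : ℝ) :
    HasDerivAt (bitWeight · b) (if b then 1 else -1) p := by
  cases b
  · exact (hasDerivAt_id p).const_sub 1
  · exact hasDerivAt_id p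

lemma bitWeight_nonneg {p : ℝ} (hp : p ∈ Set.Icc (0 : ℝ) 1) (b : Bool) : 0 ≤ bitWeight p b := by
  unfold bitWeight
  split_ifs <;> linarith [hp.1, hp.2]

lemma pwt_nonneg {p : ℝ} (hp : p ∈ Set.Icc (0 : ℝ) 1) (x : Fin n → Bool) : 0 ≤ pwt p x :=
  Finset.prod_nonneg fun j _ => bitWeight_nonneg hp (x j)

lemma pE_nonneg {p : ℝ} (hp : p ∈ Set.Icc (0 : ℝ) 1) {g : (Fin n → Bool) → ℝ}
    (hg : ∀ x, 0 ≤ g x) : 0 ≤ pE p g :=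
  Finset.sum_nonneg fun x _ => mul_nonneg (pwt_nonneg hp x) (hg x)

lemma pwtErase_update (p : ℝ) (i : Fin n) (x : Fin n → Bool) (b : Bool) :
    pwtErase p i (update x i b) = pwtErase p i x :=
  Finset.prod_congr rfl fun j hj => by rw [update_of_ne (Finset.ne_of_mem_erase hj)]

lemma pwt_eq_bitWeight_mul_pwtErase (p : ℝ) (i : Fin n) (x : Fin n → Bool) :
    pwt p x = bitWeight p (x i) * pwtErase p i x :=
  (Finset.mul_prod_erase _ (fun j => bitWeight p (x j)) (Finset.mem_univ i)).symm

lemma pwt_update (p : ℝ) (i : Fin n) (x : Fin n → Bool) (b : Bool) :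
    pwt p (update x i b) = bitWeight p b * pwtErase p i x := by
  rw [pwt_eq_bitWeight_mul_pwtErase p i, update_self, pwtErase_update]

lemma two_mul_sum_eq_sum_update (i : Fin n) (F : (Fin n → Bool) → ℝ) :
    2 * ∑ x, F x = ∑ x, (F (update x i true) + F (update x i false)) := by
  have hsplit : ∀ (b : Bool) (y : {j // j ≠ i} → Bool) (b' : Bool),
      update ((Equiv.funSplitAt i Bool).symm (b, y)) i b' =
        (Equiv.funSplitAt i Bool).symm (b', y) := by
    intro b y b'
    funext j
    by_cases h : j = i
    · subst h; simp
    · simp [h]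
  rw [← Equiv.sum_comp (Equiv.funSplitAt i Bool).symm F,
    ← Equiv.sum_comp (Equiv.funSplitAt i Bool).symm, Fintype.sum_prod_type,
    Fintype.sum_prod_type]
  simp only [hsplit, Fintype.sum_bool, Finset.sum_add_distrib]
  ring

lemma condE_update (p : ℝ) (i : Fin n) (g : (Fin n → Bool) → ℝ) (x : Fin n → Bool) (b : Bool) :
    condE p i g (update x i b) = condE p i g x := by
  simp only [condE, update_idem]

lemma coordDiff_update (f : (Fin n → Bool) → ℝ) (i : Fin n) (x : Fin n → Bool) (b : Bool) :
    coordDiff f i (update x i b) = coordDiff f i x := by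
  simp only [coordDiff, update_idem]

lemma condE_eq_self_of_update {p : ℝ} {i : Fin n} {g : (Fin n → Bool) → ℝ}
    (hg : ∀ x b, g (update x i b) = g x) : condE p i g = g := by
  funext x
  simp only [condE, hg]
  ring

lemma two_mul_pE_eq_sum_pwtErase_mul_condE (p : ℝ) (i : Fin n) (g : (Fin n → Bool) → ℝ) :
    2 * pE p g = ∑ x, pwtErase p i x * condE p i g x := by
  rw [pE, two_mul_sum_eq_sum_update i]
  refine Finset.sum_congr rfl fun x _ => ?_
  simp only [pwt_update, condE, bitWeight, if_true, Bool.false_eq_true, if_false]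
  ring

lemma pE_condE (p : ℝ) (i : Fin n) (g : (Fin n → Bool) → ℝ) :
    pE p (condE p i g) = pE p g := by
  have h := two_mul_pE_eq_sum_pwtErase_mul_condE p i (condE p i g)
  rw [condE_eq_self_of_update (condE_update p i g),
    ← two_mul_pE_eq_sum_pwtErase_mul_condE] at h
  linarith

lemma pE_coordDiff (p : ℝ) (i : Fin n) (f : (Fin n → Bool) → ℝ) :
    pE p (coordDiff f i) = ∑ x, (if x i then 1 else -1) * pwtErase p i x * f x := by
  -- both sides are half of `∑ x, pwtErase p i x * coordDiff f i x`
  have hD := two_mul_pE_eq_sum_pwtErase_mul_condE p i (coordDiff f i)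
  rw [condE_eq_self_of_update (coordDiff_update f i)] at hD
  have hsign := two_mul_sum_eq_sum_update i fun x => (if x i then 1 else -1) * pwtErase p i x * f x
  have hpair : ∀ x : Fin n → Bool,
      (if update x i true i then 1 else -1) * pwtErase p i (update x i true) * f (update x i true) +
        (if update x i false i then 1 else -1) * pwtErase p i (update x i false) *
          f (update x i false) = pwtErase p i x * coordDiff f i x := by
    intro x
    simp only [update_self, pwtErase_update, coordDiff, if_true, Bool.false_eq_true, if_false]
    ring
  simp only [hpair] at hsign
  linarith

lemma hasDerivAt_pE (f : (Fin n → Bool) → ℝ) (p : ℝ) :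
    HasDerivAt (fun t => pE t f) (∑ i, pE p (coordDiff f i)) p := by
  have hpwt : ∀ x : Fin n → Bool, HasDerivAt (fun t => pwt t x)
      (∑ i, pwtErase p i x * (if x i then 1 else -1)) p := by
    intro x
    refine (HasDerivAt.fun_finsetProd (u := Finset.univ) (f := fun j t => bitWeight t (x j))
      fun j _ => hasDerivAt_bitWeight (x j) p).congr_deriv ?_
    simp only [pwtErase, smul_eq_mul]
  have hsum : ∑ i, pE p (coordDiff f i) =
      ∑ x, (∑ i, pwtErase p i x * (if x i then 1 else -1)) * f x := by
    simp only [pE_coordDiff, Finset.sum_mul]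
    rw [Finset.sum_comm]
    exact Finset.sum_congr rfl fun x _ => Finset.sum_congr rfl fun i _ => by ring
  rw [hsum]
  exact HasDerivAt.fun_sum fun x _ => (hpwt x).mul_const (f x)

lemma pNorm_one_eq_pE_abs (p : ℝ) (g : (Fin n → Bool) → ℝ) :
    pNorm p 1 g = pE p fun x => |g x| := by
  simp [pNorm]

lemma condE_abs_sub_condE {p : ℝ} (hp : p ∈ Set.Icc (0 : ℝ) 1) (i : Fin n)
    (f : (Fin n → Bool) → ℝ) :
    condE p i (fun x => |f x - condE p i f x|) =
      fun x => 2 * p * (1 - p) * |coordDiff f i x| := by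
  funext x
  have h1 : f (update x i true) - condE p i f x = (1 - p) * coordDiff f i x := by
    simp only [condE, coordDiff]; ring
  have h0 : f (update x i false) - condE p i f x = -(p * coordDiff f i x) := by
    simp only [condE, coordDiff]; ring
  change (1 - p) * |f (update x i false) - condE p i f (update x i false)| +
    p * |f (update x i true) - condE p i f (update x i true)| = _
  rw [condE_update, condE_update, h1, h0, abs_neg, abs_mul, abs_mul, abs_of_nonneg hp.1,
    abs_of_nonneg (sub_nonneg.2 hp.2)]
  ring

lemma pNorm_sub_condE {p : ℝ} (hp : p ∈ Set.Icc (0 : ℝ) 1) (i : Fin n) (f : (Fin n → Bool) → ℝ) :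
    pNorm p 1 (fun x => f x - condE p i f x) =
      2 * p * (1 - p) * pE p fun x => |coordDiff f i x| := by
  rw [pNorm_one_eq_pE_abs, ← pE_condE p i, condE_abs_sub_condE hp]
  simp only [pE, Finset.mul_sum]
  exact Finset.sum_congr rfl fun x _ => by ring

lemma coordDiff_nonneg {f : (Fin n → Bool) → ℝ} (hf : Monotone f) (i : Fin n) (x : Fin n → Bool) :
    0 ≤ coordDiff f i x :=
  sub_nonneg.mpr (hf (update_mono le_top))

lemma two_mul_pNorm_sub_condE_le {p : ℝ} (hp : p ∈ Set.Icc (0 : ℝ) 1)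
    {f : (Fin n → Bool) → ℝ} (hf : Monotone f) (i : Fin n) :
    2 * pNorm p 1 (fun x => f x - condE p i f x) ≤ pE p (coordDiff f i) := by
  have habs : (fun x => |coordDiff f i x|) = coordDiff f i :=
    funext fun x => abs_of_nonneg (coordDiff_nonneg hf i x)
  rw [pNorm_sub_condE hp, habs]
  nlinarith [pE_nonneg hp (coordDiff_nonneg hf i), sq_nonneg (2 * p - 1)]

end PBiased

/-- For monotone f, Σᵢ E[f∘τᵢ⁺ - f∘τᵢ⁻] ≥ 2·Σᵢ ‖f - Eᵢ[f]‖₁; in particular the derivative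
of p ↦ E_{μ_p}[f] is at least 2·Σᵢ ‖f - Eᵢ[f]‖₁. -/
theorem stmt13 (n : ℕ) (f : (Fin n → Bool) → ℝ)
    (hmono : ∀ x y : Fin n → Bool, (∀ i, x i ≤ y i) → f x ≤ f y)
    (p : ℝ) (hp : p ∈ Set.Ioo (0:ℝ) 1) :
    2 * ∑ i : Fin n, pNorm p 1 (fun x => f x - condE p i f x) ≤
      (∑ i : Fin n,
        pE p (fun x => f (Function.update x i true) - f (Function.update x i false))) ∧
    ∀ D : ℝ, HasDerivAt (fun t : ℝ => pE t f) D p →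
      2 * ∑ i : Fin n, pNorm p 1 (fun x => f x - condE p i f x) ≤ D := by
  have hp' : p ∈ Set.Icc (0 : ℝ) 1 := Set.Ioo_subset_Icc_self hp
  have hf : Monotone f := fun x y hxy => hmono x y hxy
  have hsum : 2 * ∑ i : Fin n, pNorm p 1 (fun x => f x - condE p i f x) ≤
      ∑ i : Fin n, pE p (coordDiff f i) := by
    rw [Finset.mul_sum]
    exact Finset.sum_le_sum fun i _ => two_mul_pNorm_sub_condE_le hp' hf i
  exact ⟨hsum, fun D hD => (hasDerivAt_pE f p).unique hD ▸ hsum⟩
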